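/- With the notation of the component sets C_δ: let J be a connected component of C_δ(a_1,…,a_s,0) and suppose f^{s+i}(J) ∩ 𝒞_{s+i} = ∅ for 1 ≤ i ≤ n. Then for each 1 ≤ i ≤ n, the number of connected components of C_δ(a_1,…,a_s,0^{i+1}) contained in J is at most i+1, where 0^{i+1} denotes that the last i+1 symbols equal 0. -/

import Mathlib

open Set

noncomputable section

/-- `comp f n = f_{n-1} ∘ ⋯ ∘ f_0`, with `comp f 0 = id`. -/
def comp (f : ℕ → ℝ → ℝ) : ℕ → ℝ → ℝ
  | 0 => id
  | (n + 1) => f n ∘ comp f n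

/-- The critical set `𝒞_k` of `f_k` inside the interval `I`. -/
def crit (f : ℕ → ℝ → ℝ) (I : Set ℝ) (k : ℕ) : Set ℝ :=
  {x ∈ I | deriv (f k) x = 0}

/-- `T f I i x`: the maximal (pre)interval in `I` containing `x` such that
`f^j` of it avoids `𝒞_j` for all `j < i`. -/
def T (f : ℕ → ℝ → ℝ) (I : Set ℝ) (i : ℕ) (x : ℝ) : Set ℝ :=
  ⋃₀ {S | S ⊆ I ∧ IsPreconnected S ∧ x ∈ S ∧
      ∀ j < i, ∀ y ∈ S, comp f j y ∉ crit f I j}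

/-- `r f I i x`: the minimum of the lengths of the images under `f^i` of the
two connected components of `T f I i x \ {x}`. -/
def r (f : ℕ → ℝ → ℝ) (I : Set ℝ) (i : ℕ) (x : ℝ) : ℝ :=
  min (Metric.diam (comp f i '' (T f I i x ∩ Iio x)))
      (Metric.diam (comp f i '' (T f I i x ∩ Ioi x)))

/-- The set `C_δ(a_1,…,a_s)` attached to a binary word `w` (here `true = 1`, `false = 0`):
`r_i(x) ≥ δ` at positions with symbol `1`, and `0 < r_i(x) < δ` at positions with symbol `0`. -/
def Cword (f : ℕ → ℝ → ℝ) (I : Set ℝ) (δ : ℝ) (w : List Bool) : Set ℝ :=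
  {x ∈ I | ∀ i < w.length,
    (w.getD i false = true → δ ≤ r f I (i + 1) x) ∧
    (w.getD i false = false → 0 < r f I (i + 1) x ∧ r f I (i + 1) x < δ)}

/-- The number of connected components of a subset of `ℝ`. -/
def compCount (S : Set ℝ) : ℕ :=
  Set.ncard {K : Set ℝ | ∃ y ∈ S, K = connectedComponentIn S y}

/-!
Along a component `J` of `C_δ(a_1,…,a_s,0)` whose orbit meets no critical set up to time `s + n`,
all the intervals `T_{s+1+k}(x)`, `x ∈ J`, coincide. Hence on `J` each `r_{s+1+k}` is the minimum
of a nondecreasing and a nonincreasing function of `x`, i.e. quasiconcave, and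
`C_δ(a_1,…,a_s,0^{i+1}) ∩ J` is an interval (where these `r` are positive) with the `i`
intervals `{r_{s+1+k} ≥ δ}`, `1 ≤ k ≤ i`, removed. Removing an interval from a subset of a line
adds at most one component.
-/

section Components

variable {α : Type*} [ConditionallyCompleteLinearOrder α] [TopologicalSpace α] [OrderTopology α]
  [DenselyOrdered α]

theorem ordConnected_connectedComponentIn {S : Set α} {z : α} :
    (connectedComponentIn S z).OrdConnected :=
  isPreconnected_iff_ordConnected.mp isPreconnected_connectedComponentIn

theorem encard_components_le_one {A : Set α} (hA : A.OrdConnected) :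
    (connectedComponentIn A '' A).encard ≤ 1 := by
  rw [encard_le_one_iff]
  rintro _ _ ⟨x, hx, rfl⟩ ⟨y, hy, rfl⟩
  have hA' := isPreconnected_iff_ordConnected.mpr hA
  rw [hA'.connectedComponentIn hx, hA'.connectedComponentIn hy]

theorem connectedComponentIn_inter_of_ordConnected {S D : Set α} (hD : D.OrdConnected) {z : α}
    (hzS : z ∈ S) (hzD : z ∈ D) :
    connectedComponentIn (S ∩ D) z = connectedComponentIn S z ∩ D := by
  refine subset_antisymm (subset_inter (connectedComponentIn_mono z inter_subset_left)
    ((connectedComponentIn_subset _ _).trans inter_subset_right)) ?_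
  exact (isPreconnected_iff_ordConnected.mpr (ordConnected_connectedComponentIn.inter hD)
    ).subset_connectedComponentIn ⟨mem_connectedComponentIn hzS, hzD⟩
    (inter_subset_inter_left D (connectedComponentIn_subset _ _))

theorem connectedComponentIn_sdiff_of_forall_lt {S M : Set α} {z : α} (hzS : z ∈ S)
    (hzM : ∀ y ∈ M, z < y) :
    connectedComponentIn (S \ M) z = connectedComponentIn S z ∩ {x | ∀ y ∈ M, x < y} := by
  have hL : {x | ∀ y ∈ M, x < y}.OrdConnected :=
    IsLowerSet.ordConnected fun _ _ hba ha y hy => hba.trans_lt (ha y hy)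
  rw [← connectedComponentIn_inter_of_ordConnected hL hzS hzM]
  refine subset_antisymm ?_
    (connectedComponentIn_mono z fun x hx => ⟨hx.1, fun hxM => (hx.2 x hxM).false⟩)
  have hz : z ∈ connectedComponentIn (S \ M) z :=
    mem_connectedComponentIn ⟨hzS, fun h => (hzM z h).false⟩
  refine isPreconnected_connectedComponentIn.subset_connectedComponentIn hz
    (subset_inter (fun x hx => (connectedComponentIn_subset _ _ hx).1) fun x hx y hy => ?_)
  by_contra! hyx
  exact (connectedComponentIn_subset _ _
    (ordConnected_connectedComponentIn.out hz hx ⟨(hzM y hy).le, hyx⟩)).2 hy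

theorem connectedComponentIn_sdiff_of_forall_gt {S M : Set α} {z : α} (hzS : z ∈ S)
    (hzM : ∀ y ∈ M, y < z) :
    connectedComponentIn (S \ M) z = connectedComponentIn S z ∩ {x | ∀ y ∈ M, y < x} :=
  connectedComponentIn_sdiff_of_forall_lt (α := αᵒᵈ) hzS hzM

theorem encard_components_sdiff_le {S M : Set α} (hM : M.OrdConnected) :
    (connectedComponentIn (S \ M) '' (S \ M)).encard ≤
      (connectedComponentIn S '' S).encard + 1 := by
  obtain rfl | ⟨m, hm⟩ := M.eq_empty_or_nonempty
  · simp
  set L := {x | ∀ y ∈ M, x < y}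
  set U := {x | ∀ y ∈ M, y < x}
  set PL := {C ∈ connectedComponentIn S '' S | (C ∩ L).Nonempty}
  set PU := {C ∈ connectedComponentIn S '' S | (C ∩ U).Nonempty}
  have hcover : connectedComponentIn (S \ M) '' (S \ M) ⊆ (· ∩ L) '' PL ∪ (· ∩ U) '' PU := by
    rintro _ ⟨z, ⟨hzS, hzM⟩, rfl⟩
    have hside : z ∈ L ∨ z ∈ U := by
      by_contra! h
      obtain ⟨y₁, hy₁, hy₁z⟩ : ∃ y ∈ M, y ≤ z := by simpa [L] using h.1
      obtain ⟨y₂, hy₂, hzy₂⟩ : ∃ y ∈ M, z ≤ y := by simpa [U] using h.2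
      exact hzM (hM.out hy₁ hy₂ ⟨hy₁z, hzy₂⟩)
    rcases hside with hzL | hzU
    · exact .inl ⟨_, ⟨⟨z, hzS, rfl⟩, z, mem_connectedComponentIn hzS, hzL⟩,
        (connectedComponentIn_sdiff_of_forall_lt hzS hzL).symm⟩
    · exact .inr ⟨_, ⟨⟨z, hzS, rfl⟩, z, mem_connectedComponentIn hzS, hzU⟩,
        (connectedComponentIn_sdiff_of_forall_gt hzS hzU).symm⟩
  -- a component meeting both sides of `M` contains `m`
  have hboth : (PL ∩ PU).encard ≤ 1 := by
    rw [encard_le_one_iff]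
    rintro _ _ ⟨⟨⟨z, -, rfl⟩, d, hdC, hdL⟩, -, u, huC, huU⟩
      ⟨⟨⟨z', -, rfl⟩, d', hdC', hdL'⟩, -, u', huC', huU'⟩
    have hm₁ := ordConnected_connectedComponentIn.out hdC huC ⟨(hdL m hm).le, (huU m hm).le⟩
    have hm₂ := ordConnected_connectedComponentIn.out hdC' huC' ⟨(hdL' m hm).le, (huU' m hm).le⟩
    exact (connectedComponentIn_eq hm₁).trans (connectedComponentIn_eq hm₂).symm
  calc _ ≤ ((· ∩ L) '' PL ∪ (· ∩ U) '' PU).encard := encard_le_encard hcover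
    _ ≤ PL.encard + PU.encard :=
      (encard_union_le _ _).trans (add_le_add (encard_image_le _ _) (encard_image_le _ _))
    _ = (PL ∪ PU).encard + (PL ∩ PU).encard := (encard_union_add_encard_inter _ _).symm
    _ ≤ _ := add_le_add (encard_le_encard (union_subset (sep_subset _ _) (sep_subset _ _))) hboth

theorem encard_components_setOf_forall_notMem_le {A : Set α} (hA : A.OrdConnected) {M : ℕ → Set α}
    (hM : ∀ k, (M k).OrdConnected) (m : ℕ) :
    (connectedComponentIn {x ∈ A | ∀ k < m, x ∉ M k} ''
      {x ∈ A | ∀ k < m, x ∉ M k}).encard ≤ m + 1 := by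
  induction m with
  | zero => simpa using encard_components_le_one hA
  | succ m ih =>
    have hsucc : {x ∈ A | ∀ k < m + 1, x ∉ M k} = {x ∈ A | ∀ k < m, x ∉ M k} \ M m := by
      ext x
      simp only [mem_ofPred_eq, mem_sdiff, Nat.forall_lt_succ_right, and_assoc]
    rw [hsucc]
    push_cast
    exact (encard_components_sdiff_le (hM m)).trans (add_le_add_left ih 1)

end Components

theorem quasiconcaveOn_min_diam_image {E : Type*} [PseudoMetricSpace E] {g : ℝ → E} {P : Set ℝ}
    (hP : Bornology.IsBounded (g '' P)) :
    QuasiconcaveOn ℝ univ fun x =>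
      min (Metric.diam (g '' (P ∩ Iio x))) (Metric.diam (g '' (P ∩ Ioi x))) := by
  refine QuasiconcaveOn.inf (Monotone.quasiconcaveOn fun x y hxy => ?_)
    (Antitone.quasiconcaveOn fun x y hxy => ?_)
  · exact Metric.diam_mono (image_mono (inter_subset_inter_right _ (Iio_subset_Iio hxy)))
      (hP.subset (image_mono inter_subset_left))
  · exact Metric.diam_mono (image_mono (inter_subset_inter_right _ (Ioi_subset_Ioi hxy)))
      (hP.subset (image_mono inter_subset_left))

theorem encard_components_setOf_band_le {A : Set ℝ} (hA : A.OrdConnected) {ρ : ℕ → ℝ → ℝ}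
    (hρ : ∀ k, QuasiconcaveOn ℝ univ (ρ k)) (δ : ℝ) (m : ℕ) :
    (connectedComponentIn {x ∈ A | ∀ k < m, 0 < ρ k x ∧ ρ k x < δ} ''
      {x ∈ A | ∀ k < m, 0 < ρ k x ∧ ρ k x < δ}).encard ≤ m + 1 := by
  have hpos : {x ∈ A | ∀ k < m, 0 < ρ k x}.OrdConnected :=
    ⟨fun x hx y hy z hz => ⟨hA.out hx.1 hy.1 hz, fun k hk =>
      (((hρ k).convex_gt 0).ordConnected.out ⟨trivial, hx.2 k hk⟩ ⟨trivial, hy.2 k hk⟩ hz).2⟩⟩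
  have hsuper : ∀ k, {x | δ ≤ ρ k x}.OrdConnected := fun k => by
    simpa only [mem_univ, true_and] using ((hρ k) δ).ordConnected
  have hband : {x ∈ A | ∀ k < m, 0 < ρ k x ∧ ρ k x < δ} =
      {x ∈ {x ∈ A | ∀ k < m, 0 < ρ k x} | ∀ k < m, x ∉ {x | δ ≤ ρ k x}} := by
    ext x
    simp only [mem_ofPred_eq, not_le, forall_and, and_assoc]
  rw [hband]
  exact encard_components_setOf_forall_notMem_le hpos hsuper m

theorem setOf_connectedComponentIn_subset_image_inter {X : Type*} [TopologicalSpace X]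
    (S J : Set X) :
    {K | (∃ z ∈ S, K = connectedComponentIn S z) ∧ K ⊆ J} ⊆
      connectedComponentIn (S ∩ J) '' (S ∩ J) := by
  rintro _ ⟨⟨z, hzS, rfl⟩, hKJ⟩
  have hz := mem_connectedComponentIn hzS
  refine ⟨z, ⟨hzS, hKJ hz⟩, subset_antisymm (connectedComponentIn_mono z inter_subset_left) ?_⟩
  exact isPreconnected_connectedComponentIn.subset_connectedComponentIn hz
    (subset_inter (connectedComponentIn_subset _ _) hKJ)

section Dynamics

variable {f : ℕ → ℝ → ℝ} {I : Set ℝ} {i : ℕ} {x z : ℝ}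

theorem comp_mapsTo (hf : ∀ k, MapsTo (f k) I I) : ∀ j, MapsTo (comp f j) I I
  | 0 => mapsTo_id I
  | j + 1 => (hf j).comp (comp_mapsTo hf j)

theorem T_subset : T f I i x ⊆ I :=
  sUnion_subset fun _ hS => hS.1

theorem isPreconnected_T : IsPreconnected (T f I i x) :=
  isPreconnected_sUnion x _ (fun _ hS => hS.2.2.1) fun _ hS => hS.2.1

theorem comp_notMem_crit_of_mem_T {y : ℝ} (hy : y ∈ T f I i x) {j : ℕ} (hj : j < i) :
    comp f j y ∉ crit f I j := by
  obtain ⟨S, hS, hyS⟩ := hy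
  exact hS.2.2.2 j hj y hyS

theorem subset_T {S : Set ℝ} (hSI : S ⊆ I) (hS : IsPreconnected S) (hx : x ∈ S)
    (hcrit : ∀ j < i, ∀ y ∈ S, comp f j y ∉ crit f I j) : S ⊆ T f I i x :=
  subset_sUnion_of_mem ⟨hSI, hS, hx, hcrit⟩

theorem mem_T_self_of_nonempty (h : (T f I i x).Nonempty) : x ∈ T f I i x := by
  obtain ⟨_, S, hS, -⟩ := h
  exact subset_sUnion_of_mem hS hS.2.2.1

theorem T_subset_T_of_mem (hz : z ∈ T f I i x) : T f I i x ⊆ T f I i z :=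
  subset_T T_subset isPreconnected_T hz fun _ hj _ hy => comp_notMem_crit_of_mem_T hy hj

theorem T_eq_of_mem (hz : z ∈ T f I i x) : T f I i z = T f I i x :=
  (T_subset_T_of_mem (T_subset_T_of_mem hz (mem_T_self_of_nonempty ⟨z, hz⟩))).antisymm
    (T_subset_T_of_mem hz)

theorem comp_notMem_crit_of_r_pos (hr : 0 < r f I i x) {j : ℕ} (hj : j < i) :
    comp f j x ∉ crit f I j := by
  refine comp_notMem_crit_of_mem_T (mem_T_self_of_nonempty ?_) hj
  by_contra h
  simp [r, not_nonempty_iff_eq_empty.mp h] at hr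

theorem comp_notMem_crit_of_mem_Cword {δ : ℝ} (hδ : 0 < δ) {v : List Bool}
    (hx : x ∈ Cword f I δ v) {j : ℕ} (hj : j < v.length) : comp f j x ∉ crit f I j := by
  refine comp_notMem_crit_of_r_pos ?_ j.lt_succ_self
  cases hb : v.getD j false
  · exact ((hx.2 j hj).2 hb).1
  · exact hδ.trans_le ((hx.2 j hj).1 hb)

theorem Cword_append_replicate_false (δ : ℝ) (v : List Bool) (m : ℕ) :
    Cword f I δ (v ++ List.replicate m false) = {x ∈ Cword f I δ v | ∀ k < m,
      0 < r f I (v.length + k + 1) x ∧ r f I (v.length + k + 1) x < δ} := by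
  ext x
  simp only [Cword, mem_ofPred_eq, List.length_append, List.length_replicate]
  constructor
  · rintro ⟨hxI, hx⟩
    refine ⟨⟨hxI, fun j hj => ?_⟩, fun k hk => ?_⟩
    · simpa only [List.getD_append _ _ _ _ hj] using hx j (by omega)
    · have := hx (v.length + k) (by omega)
      rw [List.getD_append_right _ _ _ _ (by omega), List.getD_replicate _ (by omega)] at this
      exact this.2 rfl
  · rintro ⟨⟨hxI, hv⟩, hrep⟩
    refine ⟨hxI, fun j hj => ?_⟩
    by_cases hjv : j < v.length
    · simpa only [List.getD_append _ _ _ _ hjv] using hv j hjv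
    · obtain ⟨k, rfl⟩ : ∃ k, j = v.length + k := ⟨j - v.length, by omega⟩
      rw [List.getD_append_right _ _ _ _ (by omega), List.getD_replicate _ (by omega)]
      exact ⟨nofun, fun _ => hrep k (by omega)⟩

theorem Cword_append_replicate_false_inter {δ : ℝ} {v : List Bool} {m : ℕ} {J : Set ℝ}
    (hJ : J ⊆ Cword f I δ v) {ρ : ℕ → ℝ → ℝ}
    (hr : ∀ k < m, ∀ x ∈ J, r f I (v.length + k + 1) x = ρ k x) :
    Cword f I δ (v ++ List.replicate m false) ∩ J = {x ∈ J | ∀ k < m, 0 < ρ k x ∧ ρ k x < δ} := by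
  rw [Cword_append_replicate_false]
  ext x
  constructor
  · rintro ⟨⟨-, hx⟩, hxJ⟩
    exact ⟨hxJ, fun k hk => hr k hk x hxJ ▸ hx k hk⟩
  · rintro ⟨hxJ, hx⟩
    exact ⟨⟨hJ hxJ, fun k hk => (hr k hk x hxJ).symm ▸ hx k hk⟩, hxJ⟩

theorem r_eq_of_isPreconnected {J : Set ℝ} (hJI : J ⊆ I) (hJ : IsPreconnected J)
    (hcrit : ∀ j < i, ∀ y ∈ J, comp f j y ∉ crit f I j) (hx : x ∈ J) (hz : z ∈ J) :
    r f I i x = min (Metric.diam (comp f i '' (T f I i z ∩ Iio x)))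
      (Metric.diam (comp f i '' (T f I i z ∩ Ioi x))) := by
  rw [r, T_eq_of_mem (subset_T hJI hJ hz hcrit hx)]

end Dynamics

theorem components_inside_component_without_critical_visits_general
    (a b : ℝ) (f : ℕ → ℝ → ℝ)
    (hmaps : ∀ k, MapsTo (f k) (Icc a b) (Icc a b))
    (δ : ℝ) (hδ : 0 < δ) (w : List Bool) (n : ℕ)
    (y₀ : ℝ) (hy₀ : y₀ ∈ Cword f (Icc a b) δ (w ++ [false]))
    (J : Set ℝ) (hJ : J = connectedComponentIn (Cword f (Icc a b) δ (w ++ [false])) y₀)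
    (havoid : ∀ i, 1 ≤ i → i ≤ n → ∀ z ∈ J,
      comp f (w.length + i) z ∉ crit f (Icc a b) (w.length + i)) :
    ∀ i, 1 ≤ i → i ≤ n →
      Set.ncard {K : Set ℝ |
        (∃ z ∈ Cword f (Icc a b) δ (w ++ List.replicate (i + 1) false),
          K = connectedComponentIn (Cword f (Icc a b) δ (w ++ List.replicate (i + 1) false)) z) ∧
        K ⊆ J} ≤ i + 1 := by
  intro i _ hin
  have hJC : J ⊆ Cword f (Icc a b) δ (w ++ [false]) := hJ ▸ connectedComponentIn_subset _ _
  have hJ_pre : IsPreconnected J := hJ ▸ isPreconnected_connectedComponentIn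
  have hy₀J : y₀ ∈ J := hJ ▸ mem_connectedComponentIn hy₀
  have hJcrit : ∀ j < w.length + 1 + n, ∀ y ∈ J, comp f j y ∉ crit f (Icc a b) j := by
    intro j hj y hy
    by_cases hjw : j < w.length + 1
    · exact comp_notMem_crit_of_mem_Cword hδ (hJC hy) (by simpa using hjw)
    · obtain ⟨k, rfl⟩ : ∃ k, j = w.length + k := ⟨j - w.length, by omega⟩
      exact havoid k (by omega) (by omega) y hy
  let t k := (w ++ [false]).length + k + 1
  let ρ k x := min (Metric.diam (comp f (t k) '' (T f (Icc a b) (t k) y₀ ∩ Iio x)))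
    (Metric.diam (comp f (t k) '' (T f (Icc a b) (t k) y₀ ∩ Ioi x)))
  have hr : ∀ k < i, ∀ x ∈ J, r f (Icc a b) (t k) x = ρ k x := fun k hk x hx => by
    refine r_eq_of_isPreconnected (fun y hy => (hJC hy).1) hJ_pre (fun j hj => hJcrit j ?_) hx hy₀J
    simp only [t, List.length_append, List.length_singleton] at hj
    omega
  have hρ : ∀ k, QuasiconcaveOn ℝ univ (ρ k) := fun k => quasiconcaveOn_min_diam_image
    ((Metric.isBounded_Icc a b).subset
      ((image_mono T_subset).trans (comp_mapsTo hmaps _).image_subset))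
  have hCJ := Cword_append_replicate_false_inter (m := i) hJC hr
  rw [← List.append_cons, ← List.replicate_succ] at hCJ
  have hcount := encard_components_setOf_band_le
    (isPreconnected_iff_ordConnected.mp hJ_pre) hρ δ i
  rw [← hCJ] at hcount
  exact (encard_le_coe_iff_finite_ncard_le.mp
    ((encard_le_encard (setOf_connectedComponentIn_subset_image_inter _ J)).trans hcount)).2

/-- if a component `J` of `C_δ(a_1,…,a_s,0)` has its further images
avoiding the critical sets, then `C_δ(a_1,…,a_s,0^{i+1})` has at most `i+1`
connected components inside `J`. -/
theorem components_inside_component_without_critical_visits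
    (a b : ℝ) (hab : a ≤ b) (f : ℕ → ℝ → ℝ) (p : ℕ)
    (hC1 : ∀ k, ContDiff ℝ 1 (f k))
    (hmaps : ∀ k, MapsTo (f k) (Icc a b) (Icc a b))
    (hcrit : ∀ k, (crit f (Icc a b) k).Finite ∧ (crit f (Icc a b) k).ncard ≤ p)
    (δ : ℝ) (hδ : 0 < δ) (w : List Bool) (n : ℕ)
    (y₀ : ℝ) (hy₀ : y₀ ∈ Cword f (Icc a b) δ (w ++ [false]))
    (J : Set ℝ) (hJ : J = connectedComponentIn (Cword f (Icc a b) δ (w ++ [false])) y₀)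
    (havoid : ∀ i, 1 ≤ i → i ≤ n → ∀ z ∈ J,
      comp f (w.length + i) z ∉ crit f (Icc a b) (w.length + i)) :
    ∀ i, 1 ≤ i → i ≤ n →
      Set.ncard {K : Set ℝ |
        (∃ z ∈ Cword f (Icc a b) δ (w ++ List.replicate (i + 1) false),
          K = connectedComponentIn (Cword f (Icc a b) δ (w ++ List.replicate (i + 1) false)) z) ∧
        K ⊆ J} ≤ i + 1 :=
  components_inside_component_without_critical_visits_general a b f hmaps δ hδ w n y₀ hy₀ J hJ
    havoid
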